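/- arXiv:2509.06441 — 3 statements merged into one kernel-verified Lean document; each statement's English description precedes it below -/
import Mathlib

section
/- Let γ : ℝ → ℝ≥0 be C², satisfying γ'(r)² ≤ 4 γ(r) γ''(r) for all r, and define ψ(x,t) = γ(|x|² + 2dt) on ℝⁿ × ℝ. Then at every point (x,t) with ψ(x,t) ≠ 0, and for every orthogonal projection S onto a d-dimensional subspace of ℝⁿ, one has (1/4)|S∇ψ(x,t)|²/ψ(x,t) − S:∇²ψ(x,t) + ∂ₜψ(x,t) ≤ 0, where S:∇²ψ = tr(S ∘ ∇²ψ). -/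
/-- If `γ : ℝ → ℝ≥0` is C² with `γ'² ≤ 4 γ γ''` (barrier condition), and
`ψ(x,t) = γ(‖x‖² + 2dt)`, then wherever `ψ ≠ 0`, for any orthogonal projection `S` onto a
`d`-dimensional subspace, writing `∇ψ = 2γ'(r) • x`, `S:∇²ψ = 4γ''(r)‖Sx‖² + 2dγ'(r)`,
`∂ₜψ = 2dγ'(r)` with `r = ‖x‖² + 2dt`, one has
`(1/4)‖S∇ψ‖²/ψ − S:∇²ψ + ∂ₜψ ≤ 0`. -/
theorem stmt1 (n d : ℕ) (hd : 1 ≤ d) (hdn : d ≤ n)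
    (γ : ℝ → ℝ) (hγC2 : ContDiff ℝ 2 γ) (hγnonneg : ∀ r, 0 ≤ γ r)
    (hbarrier : ∀ r, (deriv γ r) ^ 2 ≤ 4 * γ r * deriv (deriv γ) r)
    (x : EuclideanSpace ℝ (Fin n)) (t : ℝ)
    (K : Submodule ℝ (EuclideanSpace ℝ (Fin n))) (hK : Module.finrank ℝ K = d)
    (hψ : γ (‖x‖ ^ 2 + 2 * d * t) ≠ 0) :
    (1 / 4) * ‖(2 * deriv γ (‖x‖ ^ 2 + 2 * d * t)) •
        (K.orthogonalProjectionOnto x : EuclideanSpace ℝ (Fin n))‖ ^ 2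
        / γ (‖x‖ ^ 2 + 2 * d * t)
      - (4 * deriv (deriv γ) (‖x‖ ^ 2 + 2 * d * t) *
          ‖(K.orthogonalProjectionOnto x : EuclideanSpace ℝ (Fin n))‖ ^ 2
        + 2 * d * deriv γ (‖x‖ ^ 2 + 2 * d * t))
      + 2 * d * deriv γ (‖x‖ ^ 2 + 2 * d * t) ≤ 0 := by
  set r := ‖x‖ ^ 2 + 2 * d * t with hr
  set a := ‖(K.orthogonalProjectionOnto x : EuclideanSpace ℝ (Fin n))‖ ^ 2 with ha
  have ha0 : 0 ≤ a := sq_nonneg _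
  have hγpos : 0 < γ r := lt_of_le_of_ne (hγnonneg r) (Ne.symm hψ)
  have hb := hbarrier r
  have hnorm : ‖(2 * deriv γ r) •
      (K.orthogonalProjectionOnto x : EuclideanSpace ℝ (Fin n))‖ ^ 2
      = (2 * deriv γ r) ^ 2 * a := by
    rw [norm_smul, mul_pow, ha]; rw [Real.norm_eq_abs, sq_abs]
  rw [hnorm]
  have key : (1 / 4) * ((2 * deriv γ r) ^ 2 * a) / γ r
      ≤ 4 * deriv (deriv γ) r * a := by
    rw [div_le_iff₀ hγpos]
    have h1 : (deriv γ r) ^ 2 * a ≤ 4 * γ r * deriv (deriv γ) r * a :=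
      mul_le_mul_of_nonneg_right hb ha0
    nlinarith [hγnonneg r]
  linarith
end

section
/- Let E ⊆ ℝⁿ be a measurable set, f : ℝⁿ → ℝⁿ a C¹ diffeomorphism, and set δ = max(‖f − Id‖_∞, ‖Jf − 1‖_∞), where Jf denotes the Jacobian determinant of f. Assume δ < 1. Then for any closed ball B = B(a,R), |ℒⁿ(B ∩ f(E)) − ℒⁿ(B ∩ E)| ≤ δ·(ωₙRⁿ + max(2ⁿωₙ, 2nωₙ(R+1)^{n−1})), where ℒⁿ is Lebesgue measure and ωₙ the volume of the n-dimensional unit ball. -/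
/-!
Put `s = f⁻¹(B) ∩ E`, so that `f(s) = B ∩ f(E)`. By the change of variables formula
`ℒⁿ(f(s)) = ∫_s |Jf|`, and `|Jf - 1| ≤ δ` gives `|ℒⁿ(f(s)) - ℒⁿ(s)| ≤ δ ℒⁿ(s)`.
Since `f` moves points by at most `δ`, `B(a, R - δ) ⊆ f⁻¹(B) ⊆ B(a, R + δ)`, so `s` and `B ∩ E`
differ only inside the annuli `B(a, R + δ) \ B(a, R)` and `B(a, R) \ B(a, R - δ)`, each of volume
at most `n ωₙ δ (R + 1)ⁿ⁻¹` by the mean value bound `bⁿ - aⁿ ≤ n (b - a) bⁿ⁻¹`.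
-/

open MeasureTheory Metric

section Perturbation

variable {X : Type*} [PseudoMetricSpace X] {f : X → X} {δ : ℝ}

theorem preimage_closedBall_subset_closedBall_add (hf : ∀ x, dist (f x) x ≤ δ) (a : X) (R : ℝ) :
    f ⁻¹' closedBall a R ⊆ closedBall a (R + δ) := fun x hx => by
  have := dist_triangle_left x a (f x)
  simp only [Set.mem_preimage, mem_closedBall] at hx ⊢
  linarith [hf x]

theorem closedBall_sub_subset_preimage_closedBall (hf : ∀ x, dist (f x) x ≤ δ) (a : X) (R : ℝ) :
    closedBall a (R - δ) ⊆ f ⁻¹' closedBall a R := fun x hx => by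
  have := dist_triangle (f x) x a
  simp only [Set.mem_preimage, mem_closedBall] at hx ⊢
  linarith [hf x]

end Perturbation

theorem abs_measureReal_inter_sub_le {α : Type*} [MeasurableSpace α] (μ : Measure α)
    {L S T U : Set α} (E : Set α) (hLS : L ⊆ S) (hSU : S ⊆ U) (hTU : T ⊆ U)
    (hU : μ U ≠ ⊤) :
    |μ.real (S ∩ E) - μ.real (T ∩ E)| ≤ max (μ.real (U \ T)) (μ.real (T \ L)) := by
  have hfin : ∀ V ⊆ U, μ V ≠ ⊤ := fun V hV => ne_top_of_le_ne_top hU (measure_mono hV)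
  have hS : S ∩ E ⊆ T ∩ E ∪ U \ T := fun x ⟨hxS, hxE⟩ => by
    by_cases hxT : x ∈ T
    exacts [Or.inl ⟨hxT, hxE⟩, Or.inr ⟨hSU hxS, hxT⟩]
  have hT : T ∩ E ⊆ S ∩ E ∪ T \ L := fun x ⟨hxT, hxE⟩ => by
    by_cases hxS : x ∈ S
    exacts [Or.inl ⟨hxS, hxE⟩, Or.inr ⟨hxT, fun hxL => hxS (hLS hxL)⟩]
  have hS' := (measureReal_mono hS (hfin _ (Set.union_subset (Set.inter_subset_left.trans hTU)
    Set.sdiff_subset))).trans (measureReal_union_le _ _)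
  have hT' := (measureReal_mono hT (hfin _ (Set.union_subset (Set.inter_subset_left.trans hSU)
    (Set.sdiff_subset.trans hTU)))).trans (measureReal_union_le _ _)
  rw [abs_le]
  constructor <;> linarith [le_max_left (μ.real (U \ T)) (μ.real (T \ L)),
    le_max_right (μ.real (U \ T)) (μ.real (T \ L))]

section AddHaar

open Module

variable {E : Type*} [NormedAddCommGroup E] [NormedSpace ℝ E] [MeasurableSpace E] [BorelSpace E]
  [FiniteDimensional ℝ E] (μ : Measure E) [μ.IsAddHaarMeasure]

theorem addHaar_real_closedBall_diff_closedBall_sub_le [Nontrivial E] (x : E) {r t : ℝ}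
    (hr : 0 ≤ r) (ht : 0 ≤ t) :
    μ.real (closedBall x r \ closedBall x (r - t)) ≤
      finrank ℝ E * μ.real (ball 0 1) * t * r ^ (finrank ℝ E - 1) := by
  set d := finrank ℝ E
  have hω : 0 ≤ μ.real (ball (0 : E) 1) := measureReal_nonneg
  rcases le_or_gt t r with htr | hrt
  · rw [measureReal_sdiff (closedBall_subset_closedBall (by linarith)) measurableSet_closedBall
      measure_closedBall_lt_top.ne, Measure.addHaar_real_closedBall μ x hr,
      Measure.addHaar_real_closedBall μ x (by linarith)]
    have := (le_abs_self _).trans (abs_pow_sub_pow_le r (r - t) d)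
    rw [sub_sub_cancel, abs_of_nonneg ht, abs_of_nonneg hr, abs_of_nonneg (by linarith),
      max_eq_left (by linarith)] at this
    nlinarith
  · have hd : 1 ≤ (d : ℝ) := by exact_mod_cast finrank_pos
    rw [closedBall_eq_empty (x := x).2 (by linarith : r - t < 0), Set.sdiff_empty,
      Measure.addHaar_real_closedBall μ x hr, ← Nat.sub_add_cancel (finrank_pos : 0 < d), pow_succ]
    have hp : 0 ≤ r ^ (d - 1) := by positivity
    calc r ^ (d - 1) * r * μ.real (ball 0 1) ≤ 1 * μ.real (ball 0 1) * t * r ^ (d - 1) := by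
          nlinarith [mul_nonneg hp hω]
      _ ≤ d * μ.real (ball 0 1) * t * r ^ (d - 1) := by gcongr

theorem abs_addHaar_real_image_sub_le {f : E → E} {f' : E → E →L[ℝ] E} {s : Set E} {δ : ℝ}
    (hs : MeasurableSet s) (hf' : ∀ x ∈ s, HasFDerivWithinAt f (f' x) s x) (hinj : Set.InjOn f s)
    (hdet : ∀ x ∈ s, |(f' x).det - 1| ≤ δ) (hμs : μ s ≠ ⊤) :
    |μ.real (f '' s) - μ.real s| ≤ δ * μ.real s := by
  rcases s.eq_empty_or_nonempty with rfl | ⟨x₀, hx₀⟩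
  · simp
  have hδ : 0 ≤ δ := (abs_nonneg _).trans (hdet x₀ hx₀)
  have hcov := lintegral_abs_det_fderiv_eq_addHaar_image μ hs hf' hinj
  have hup : μ (f '' s) ≤ ENNReal.ofReal (1 + δ) * μ s := by
    rw [← hcov, ← setLIntegral_const]
    refine setLIntegral_mono' hs fun x hx => ENNReal.ofReal_le_ofReal ?_
    have := abs_le.1 (hdet x hx)
    exact abs_le.2 ⟨by linarith, by linarith⟩
  have hlo : ENNReal.ofReal (1 - δ) * μ s ≤ μ (f '' s) := by
    rw [← hcov, ← setLIntegral_const]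
    refine setLIntegral_mono' hs fun x hx => ENNReal.ofReal_le_ofReal ?_
    have := abs_le.1 (hdet x hx)
    exact (by linarith : 1 - δ ≤ (f' x).det).trans (le_abs_self _)
  have hup' : μ.real (f '' s) ≤ (1 + δ) * μ.real s := by
    simpa [measureReal_def, ENNReal.toReal_ofReal (by linarith : 0 ≤ 1 + δ)] using
      ENNReal.toReal_mono (by finiteness) hup
  have hlo' : max (1 - δ) 0 * μ.real s ≤ μ.real (f '' s) := by
    simpa [measureReal_def, ENNReal.toReal_ofReal'] using
      ENNReal.toReal_mono (ne_top_of_le_ne_top (by finiteness) hup) hlo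
  rw [abs_le]
  constructor <;> nlinarith [le_max_left (1 - δ) 0, measureReal_nonneg (μ := μ) (s := s)]

theorem abs_addHaar_real_preimage_closedBall_inter_sub_le [Nontrivial E] {f : E → E} {δ : ℝ}
    (hf : ∀ x, dist (f x) x ≤ δ) (hδ : 0 ≤ δ) (S : Set E) (a : E) {R : ℝ} (hR : 0 ≤ R) :
    |μ.real (f ⁻¹' closedBall a R ∩ S) - μ.real (closedBall a R ∩ S)| ≤
      finrank ℝ E * μ.real (ball 0 1) * δ * (R + δ) ^ (finrank ℝ E - 1) := by
  have houter := addHaar_real_closedBall_diff_closedBall_sub_le μ a (by linarith : 0 ≤ R + δ) hδ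
  rw [add_sub_cancel_right] at houter
  have hinner := addHaar_real_closedBall_diff_closedBall_sub_le μ a hR hδ
  refine (abs_measureReal_inter_sub_le μ S (closedBall_sub_subset_preimage_closedBall hf a R)
    (preimage_closedBall_subset_closedBall_add hf a R)
    (closedBall_subset_closedBall (by linarith)) measure_closedBall_lt_top.ne).trans
    (max_le houter (hinner.trans ?_))
  gcongr
  linarith

end AddHaar

theorem stmt3_general (n : ℕ) (hn : 1 ≤ n)
    (E : Set (EuclideanSpace ℝ (Fin n))) (hE : MeasurableSet E)
    (f : EuclideanSpace ℝ (Fin n) → EuclideanSpace ℝ (Fin n))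
    (g : EuclideanSpace ℝ (Fin n) → EuclideanSpace ℝ (Fin n))
    (hf : ContDiff ℝ 1 f)
    (hfg : Function.LeftInverse g f) (hgf : Function.RightInverse g f)
    (δ : ℝ) (hδ1 : ∀ x, ‖f x - x‖ ≤ δ)
    (hδ2 : ∀ x, |(fderiv ℝ f x).det - 1| ≤ δ)
    (hδlt : δ < 1)
    (a : EuclideanSpace ℝ (Fin n)) (R : ℝ) (hR : 0 < R)
    (ω : ℝ) (hω : ω = (volume (ball (0 : EuclideanSpace ℝ (Fin n)) 1)).toReal) :
    |(volume (closedBall a R ∩ f '' E)).toReal - (volume (closedBall a R ∩ E)).toReal|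
      ≤ δ * (ω * R ^ n + max (2 ^ n * ω) (2 * n * ω * (R + 1) ^ (n - 1))) := by
  have : Nontrivial (EuclideanSpace ℝ (Fin n)) :=
    (Module.finrank_pos_iff (R := ℝ)).mp (by rw [finrank_euclideanSpace_fin]; exact hn)
  have hδ : 0 ≤ δ := (norm_nonneg _).trans (hδ1 a)
  have hdist : ∀ x, dist (f x) x ≤ δ := fun x => (dist_eq_norm _ _).trans_le (hδ1 x)
  set s := f ⁻¹' closedBall a R ∩ E
  have himage : f '' s = closedBall a R ∩ f '' E := by
    rw [Set.image_inter hfg.injective, Set.image_preimage_eq _ hgf.surjective]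
  have hjac : |volume.real (f '' s) - volume.real s| ≤ δ * volume.real s :=
    abs_addHaar_real_image_sub_le volume
      ((hf.continuous.measurable measurableSet_closedBall).inter hE)
      (fun x _ => (hf.differentiable one_ne_zero x).hasFDerivAt.hasFDerivWithinAt)
      hfg.injective.injOn (fun x _ => hδ2 x)
      (measure_ne_top_of_subset (Set.inter_subset_left.trans
        (preimage_closedBall_subset_closedBall_add hdist a R)) measure_closedBall_lt_top.ne)
  rw [← measureReal_def] at hω
  set K := n * ω * δ * (R + 1) ^ (n - 1) with hK
  have hK0 : 0 ≤ K := by rw [hK, hω]; positivity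
  have hsE : |volume.real s - volume.real (closedBall a R ∩ E)| ≤ K := by
    refine (abs_addHaar_real_preimage_closedBall_inter_sub_le volume hdist hδ E a hR.le).trans ?_
    rw [finrank_euclideanSpace_fin, hK, hω]
    gcongr
  have hBE : volume.real (closedBall a R ∩ E) ≤ ω * R ^ n := by
    refine (measureReal_mono Set.inter_subset_left measure_closedBall_lt_top.ne).trans_eq ?_
    rw [Measure.addHaar_real_closedBall volume a hR.le, finrank_euclideanSpace_fin, hω, mul_comm]
  have hs : volume.real s ≤ ω * R ^ n + K := by linarith [(abs_le.1 hsE).2]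
  simp only [← measureReal_def, ← himage]
  calc _ ≤ |volume.real (f '' s) - volume.real s|
          + |volume.real s - volume.real (closedBall a R ∩ E)| := abs_sub_le _ _ _
    _ ≤ δ * (ω * R ^ n + K) + K := add_le_add (hjac.trans (by gcongr)) hsE
    _ ≤ δ * (ω * R ^ n + 2 * n * ω * (R + 1) ^ (n - 1)) := by nlinarith
    _ ≤ _ := by gcongr; exact le_max_right _ _

/-- If `f` is a C¹ diffeomorphism of ℝⁿ with
`δ = max(‖f − Id‖_∞, ‖Jf − 1‖_∞) < 1`, then for any ball `B(a,R)`, `E` measurable,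
`|ℒⁿ(B ∩ f(E)) − ℒⁿ(B ∩ E)| ≤ δ(ωₙRⁿ + max(2ⁿωₙ, 2nωₙ(R+1)^{n−1}))`. -/
theorem stmt3 (n : ℕ) (hn : 1 ≤ n)
    (E : Set (EuclideanSpace ℝ (Fin n))) (hE : MeasurableSet E)
    (f : EuclideanSpace ℝ (Fin n) → EuclideanSpace ℝ (Fin n))
    (g : EuclideanSpace ℝ (Fin n) → EuclideanSpace ℝ (Fin n))
    (hf : ContDiff ℝ 1 f) (hg : ContDiff ℝ 1 g)
    (hfg : Function.LeftInverse g f) (hgf : Function.RightInverse g f)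
    (δ : ℝ) (hδ1 : ∀ x, ‖f x - x‖ ≤ δ)
    (hδ2 : ∀ x, |(fderiv ℝ f x).det - 1| ≤ δ)
    (hδlt : δ < 1)
    (a : EuclideanSpace ℝ (Fin n)) (R : ℝ) (hR : 0 < R)
    (ω : ℝ) (hω : ω = (volume (ball (0 : EuclideanSpace ℝ (Fin n)) 1)).toReal) :
    |(volume (closedBall a R ∩ f '' E)).toReal - (volume (closedBall a R ∩ E)).toReal|
      ≤ δ * (ω * R ^ n + max (2 ^ n * ω) (2 * n * ω * (R + 1) ^ (n - 1))) :=
  stmt3_general n hn E hE f g hf hfg hgf δ hδ1 hδ2 hδlt a R hR ω hω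
end

section
/- Let (f_j)_{j∈ℕ} be a sequence of nonincreasing functions ℝ → ℝ. Assume there exists a dense set A ⊆ ℝ such that for every t ∈ A the sequence (f_j(t))_j converges. Then there exists a set S ⊆ ℝ whose complement is countable such that (f_j(t))_j converges for every t ∈ S, and the pointwise limit function is nonincreasing on S. -/
/-!
The limits `g` on the dense set `A` form a nonincreasing function there. Its upper envelope
`G t = sup {g a | a ∈ A, t < a}` is nonincreasing on the whole line, hence continuous off a
countable set. At a continuity point `t`, squeezing `f j t` between `f j b` (with `b > t` and
`g b` close to `G t` from below) and `f j a` (with `a < t` close to `t`, so that `g a ≤ G s`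
for some `s < a` with `G s` close to `G t`) shows that `f j t → G t`.
-/

open Filter Set Topology

section SupAbove

variable {α β : Type*} [LinearOrder α] [ConditionallyCompleteLinearOrder β]

theorem antitoneOn_of_tendsto {ι : Type*} {l : Filter ι} [l.NeBot] {f : ι → α → β}
    [TopologicalSpace β] [OrderClosedTopology β] (hf : ∀ i, Antitone (f i)) {A : Set α}
    {g : α → β} (hg : ∀ a ∈ A, Tendsto (fun i => f i a) l (𝓝 (g a))) : AntitoneOn g A :=
  fun a ha b hb hab => le_of_tendsto_of_tendsto' (hg b hb) (hg a ha) fun i => hf i hab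

noncomputable def supAbove (g : α → β) (A : Set α) (t : α) : β :=
  sSup (g '' (A ∩ Ioi t))

variable {g : α → β} {A : Set α}

theorem bddAbove_image_inter_Ioi (hg : AntitoneOn g A) {a t : α} (ha : a ∈ A) (hat : a ≤ t) :
    BddAbove (g '' (A ∩ Ioi t)) := by
  refine ⟨g a, ?_⟩
  rintro _ ⟨b, ⟨hb, htb⟩, rfl⟩
  exact hg ha hb (hat.trans htb.le)

theorem supAbove_le (hg : AntitoneOn g A) {a t : α} (ha : a ∈ A) (hat : a < t)
    (hne : (A ∩ Ioi t).Nonempty) : supAbove g A t ≤ g a := by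
  refine csSup_le (hne.image g) ?_
  rintro _ ⟨b, ⟨hb, htb⟩, rfl⟩
  exact hg ha hb (hat.trans htb).le

theorem le_supAbove (hg : AntitoneOn g A) {a s t : α} (hs : s ∈ A) (hst : s ≤ t) (ha : a ∈ A)
    (hta : t < a) : g a ≤ supAbove g A t :=
  le_csSup (bddAbove_image_inter_Ioi hg hs hst) ⟨a, ⟨ha, hta⟩, rfl⟩

variable [TopologicalSpace α] [OrderTopology α] [NoMinOrder α] [NoMaxOrder α]

theorem antitone_supAbove (hg : AntitoneOn g A) (hA : Dense A) : Antitone (supAbove g A) := by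
  intro s t hst
  obtain ⟨a, ha, has⟩ := hA.exists_lt s
  obtain ⟨b, hb, htb⟩ := hA.exists_gt t
  refine csSup_le_csSup (bddAbove_image_inter_Ioi hg ha has.le) ⟨g b, b, ⟨hb, htb⟩, rfl⟩ ?_
  exact image_mono (inter_subset_inter_right A (Ioi_subset_Ioi hst))

variable [DenselyOrdered α] [TopologicalSpace β] [OrderTopology β]

theorem tendsto_supAbove_of_continuousAt {ι : Type*} {l : Filter ι} {f : ι → α → β}
    (hf : ∀ i, Antitone (f i)) (hA : Dense A) (hg : AntitoneOn g A)
    (hlim : ∀ a ∈ A, Tendsto (fun i => f i a) l (𝓝 (g a))) {t : α}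
    (ht : ContinuousAt (supAbove g A) t) :
    Tendsto (fun i => f i t) l (𝓝 (supAbove g A t)) := by
  obtain ⟨b₀, hb₀, htb₀⟩ := hA.exists_gt t
  have hne : (A ∩ Ioi t).Nonempty := ⟨b₀, hb₀, htb₀⟩
  refine tendsto_order.2 ⟨fun x hx => ?_, fun x hx => ?_⟩
  · obtain ⟨_, ⟨b, ⟨hb, htb⟩, rfl⟩, hxb⟩ := exists_lt_of_lt_csSup (hne.image g) hx
    filter_upwards [(hlim b hb).eventually (eventually_gt_nhds hxb)] with i hi
    exact hi.trans_le (hf i htb.le)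
  · obtain ⟨s, hst, hsx⟩ := (ht.eventually (eventually_lt_nhds hx)).exists_lt
    obtain ⟨a, ha, hsa, hat⟩ := hA.exists_between hst
    obtain ⟨c, hc, hcs⟩ := hA.exists_lt s
    have hax : g a < x := (le_supAbove hg hc hcs.le ha hsa).trans_lt hsx
    filter_upwards [(hlim a ha).eventually (eventually_lt_nhds hax)] with i hi
    exact (hf i hat.le).trans_lt hi

end SupAbove

/-- If `(f_j)` are nonincreasing functions ℝ → ℝ converging pointwise on a
dense set `A`, then they converge on a set `S` with countable complement, and the limit is
nonincreasing on `S`. -/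
theorem stmt4 (f : ℕ → ℝ → ℝ) (hmono : ∀ j, Antitone (f j))
    (A : Set ℝ) (hA : Dense A)
    (hconv : ∀ t ∈ A, ∃ l : ℝ, Tendsto (fun j => f j t) atTop (nhds l)) :
    ∃ (S : Set ℝ) (g : ℝ → ℝ), Sᶜ.Countable ∧
      (∀ t ∈ S, Tendsto (fun j => f j t) atTop (nhds (g t))) ∧
      AntitoneOn g S := by
  choose! g hg using hconv
  have hganti : AntitoneOn g A := antitoneOn_of_tendsto hmono hg
  have hG : Antitone (supAbove g A) := antitone_supAbove hganti hA
  exact ⟨{t | ContinuousAt (supAbove g A) t}, supAbove g A, hG.countable_not_continuousAt,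
    fun t ht => tendsto_supAbove_of_continuousAt hmono hA hganti hg ht, hG.antitoneOn _⟩
end
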